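/- Let k be a field, Π a presentation on a set E over k, and X ⊆ E. Then both Π↾X = (V↾X, W.X) and Π.X = (V.X, W↾X) are presentations on X over k. -/

import Mathlib

open Function Set

noncomputable section

variable {α k : Type*} [Field k]

/-- Axiom (O2) for a pair of families of subsets of the ground set `E`. -/
def AxO2 (E : Set α) (𝒞 𝒟 : Set (Set α)) : Prop :=
  ∀ P Q : Set α, ∀ e : α, Disjoint P Q → e ∉ P → e ∉ Q → P ∪ Q ∪ {e} = E →
    (∃ C ∈ 𝒞, e ∈ C ∧ C ⊆ P ∪ {e}) ∨ (∃ D ∈ 𝒟, e ∈ D ∧ D ⊆ Q ∪ {e})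

/-- Two vectors are orthogonal: supports intersect finitely and the sum of products is zero. -/
def Orthog (v w : α → k) : Prop :=
  (support v ∩ support w).Finite ∧ ∑ᶠ e, v e * w e = 0

/-- The subspace of `k^α` of functions supported in `E` (the formal meaning of `k^E`). -/
def FunOn (E : Set α) : Submodule k (α → k) where
  carrier := {v | support v ⊆ E}
  add_mem' hf hg := (support_add _ _).trans (union_subset hf hg)
  zero_mem' := by simp
  smul_mem' c f hf := (support_const_smul_subset c f).trans hf

/-- The set `S(V)` of supports of elements of `V`. -/
def suppSet (V : Submodule k (α → k)) : Set (Set α) := support '' (V : Set (α → k))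

/-- A presentation on the ground set `E` over `k`: a pair of orthogonal subspaces of `k^E`
whose families of supports satisfy (O2). -/
def IsPresentationOn (E : Set α) (V W : Submodule k (α → k)) : Prop :=
  V ≤ FunOn E ∧ W ≤ FunOn E ∧ (∀ v ∈ V, ∀ w ∈ W, Orthog v w) ∧
    AxO2 E (suppSet V) (suppSet W)

/-- Minimal nonempty elements of a family of sets. -/
def MinNE (𝒜 : Set (Set α)) (o : Set α) : Prop :=
  o ∈ 𝒜 ∧ o.Nonempty ∧ ∀ o' ∈ 𝒜, o'.Nonempty → o' ⊆ o → o' = o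

/-- A circuit of a matroid: a minimal dependent set. -/
def MatCircuit (M : Matroid α) (C : Set α) : Prop := Minimal M.Dep C

/-- The pair `(V, W)` presents the matroid `M` on ground set `E`. -/
def Presents (E : Set α) (V W : Submodule k (α → k)) (M : Matroid α) : Prop :=
  M.E = E ∧ (∀ C, MatCircuit M C ↔ MinNE (suppSet V) C) ∧
    (∀ D, MatCircuit M✶ D ↔ MinNE (suppSet W) D)

/-- Restriction of a vector to `X`, as a linear endomap of `k^α` (zeroing outside `X`). -/
def indLM (X : Set α) : (α → k) →ₗ[k] (α → k) where
  toFun v := X.indicator v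
  map_add' f g := by
    funext a
    by_cases h : a ∈ X <;> simp [Set.indicator_of_mem, Set.indicator_of_notMem, h]
  map_smul' c f := by
    funext a
    by_cases h : a ∈ X <;> simp [Set.indicator_of_mem, Set.indicator_of_notMem, h]

/-- Contraction `V.X` of a subspace to `X`. -/
def conV (V : Submodule k (α → k)) (X : Set α) : Submodule k (α → k) :=
  Submodule.map (indLM X) V

/-- Restriction of a pair `(V,W)` to the ground set `X`: `(V↾X, W.X)`. -/
def pairRes (Pr : Submodule k (α → k) × Submodule k (α → k)) (X : Set α) :
    Submodule k (α → k) × Submodule k (α → k) :=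
  (Pr.1 ⊓ FunOn X, conV Pr.2 X)

/-- Contraction of a pair `(V,W)` to the ground set `X`: `(V.X, W↾X)`. -/
def pairCon (Pr : Submodule k (α → k) × Submodule k (α → k)) (X : Set α) :
    Submodule k (α → k) × Submodule k (α → k) :=
  (conV Pr.1 X, Pr.2 ⊓ FunOn X)

/-- A set `I` is `Π`-independent (w.r.t. the vector subspace `V`): it includes no
nonempty support of a vector. -/
def PresIndep (V : Submodule k (α → k)) (I : Set α) : Prop :=
  ∀ v ∈ V, support v ⊆ I → v = 0

end

/-!
To restrict to `X ⊆ E`, extend a partition `X = P ∪̇ Q ∪̇ {e}` to the partition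
`E = P ∪̇ (Q ∪ (E \ X)) ∪̇ {e}` and apply (O2) on `E`: a support on the `P`-side already lies
in `X`, and a support `D` on the other side gives the support `X ∩ D` of `W.X`. Orthogonality
survives because a vector of `V↾X` vanishes off `X`. Contraction is restriction of the dual
presentation `(W, V)`.
-/

section Minors

variable {α k : Type*} [Field k]

theorem indLM_apply (X : Set α) (v : α → k) : indLM X v = X.indicator v := rfl

theorem Orthog.symm {v w : α → k} (h : Orthog v w) : Orthog w v :=
  ⟨by rw [inter_comm]; exact h.1, by simpa only [mul_comm] using h.2⟩

theorem Orthog.indicator_right {X : Set α} {v w : α → k} (h : Orthog v w)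
    (hv : support v ⊆ X) : Orthog v (X.indicator w) := by
  have hsupp : support (X.indicator w) ⊆ support w := by
    rw [support_indicator]
    exact inter_subset_right
  refine ⟨h.1.subset (inter_subset_inter_right _ hsupp), ?_⟩
  rw [← h.2]
  refine finsum_congr fun e => ?_
  by_cases he : e ∈ X
  · rw [indicator_of_mem he]
  · rw [notMem_support.mp (notMem_subset hv he), zero_mul, zero_mul]

theorem AxO2.symm {E : Set α} {𝒞 𝒟 : Set (Set α)} (h : AxO2 E 𝒞 𝒟) : AxO2 E 𝒟 𝒞 :=
  fun P Q e hPQ heP heQ hE => (h Q P e hPQ.symm heQ heP (by rwa [union_comm Q P])).symm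

theorem AxO2.restrict {E X : Set α} {𝒞 𝒟 : Set (Set α)} (h : AxO2 E 𝒞 𝒟) (hX : X ⊆ E) :
    AxO2 X {C ∈ 𝒞 | C ⊆ X} ((X ∩ ·) '' 𝒟) := by
  intro P Q e hPQ heP heQ hPQe
  have hPeX : P ∪ {e} ⊆ X := hPQe ▸ union_subset_union_left _ subset_union_left
  have heX : e ∈ X := hPeX (mem_union_right _ rfl)
  have hE : P ∪ (Q ∪ E \ X) ∪ {e} = E := by
    rw [← union_sdiff_cancel hX, ← hPQe]
    ext a
    simp only [mem_union, mem_sdiff]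
    tauto
  have hdisj : Disjoint P (Q ∪ E \ X) :=
    hPQ.union_right (disjoint_sdiff_right.mono_left (subset_union_left.trans hPeX))
  have heQ' : e ∉ Q ∪ E \ X := fun h' => h'.elim heQ fun h'' => h''.2 heX
  rcases h P (Q ∪ E \ X) e hdisj heP heQ' hE with ⟨C, hC, heC, hCP⟩ | ⟨D, hD, heD, hDQ⟩
  · exact Or.inl ⟨C, ⟨hC, hCP.trans hPeX⟩, heC, hCP⟩
  · refine Or.inr ⟨X ∩ D, mem_image_of_mem _ hD, ⟨heX, heD⟩, ?_⟩
    rintro a ⟨haX, haD⟩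
    rcases hDQ haD with (haQ | haEX) | hae
    · exact Or.inl haQ
    · exact absurd haX haEX.2
    · exact Or.inr hae

theorem suppSet_inf_funOn (V : Submodule k (α → k)) (X : Set α) :
    suppSet (V ⊓ FunOn X) = {C ∈ suppSet V | C ⊆ X} := by
  ext C
  constructor
  · rintro ⟨v, ⟨hv, hvX⟩, rfl⟩
    exact ⟨⟨v, hv, rfl⟩, hvX⟩
  · rintro ⟨⟨v, hv, rfl⟩, hvX⟩
    exact ⟨v, ⟨hv, hvX⟩, rfl⟩

theorem suppSet_conV (W : Submodule k (α → k)) (X : Set α) :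
    suppSet (conV W X) = (X ∩ ·) '' suppSet W := by
  simp only [suppSet, conV, Submodule.map_coe, image_image, indLM_apply, support_indicator]

theorem conV_le_funOn (W : Submodule k (α → k)) (X : Set α) : conV W X ≤ FunOn X := by
  rintro _ ⟨w, -, rfl⟩
  exact support_indicator_subset

theorem IsPresentationOn.symm {E : Set α} {V W : Submodule k (α → k)}
    (h : IsPresentationOn E V W) : IsPresentationOn E W V :=
  ⟨h.2.1, h.1, fun w hw v hv => (h.2.2.1 v hv w hw).symm, h.2.2.2.symm⟩

theorem IsPresentationOn.restrict {E X : Set α} {V W : Submodule k (α → k)}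
    (h : IsPresentationOn E V W) (hX : X ⊆ E) :
    IsPresentationOn X (V ⊓ FunOn X) (conV W X) := by
  obtain ⟨-, -, horth, hO2⟩ := h
  refine ⟨inf_le_right, conV_le_funOn W X, ?_, ?_⟩
  · rintro v ⟨hv, hvX⟩ _ ⟨w, hw, rfl⟩
    exact (horth v hv w hw).indicator_right hvX
  · rw [suppSet_inf_funOn, suppSet_conV]
    exact hO2.restrict hX

theorem IsPresentationOn.contract {E X : Set α} {V W : Submodule k (α → k)}
    (h : IsPresentationOn E V W) (hX : X ⊆ E) :
    IsPresentationOn X (conV V X) (W ⊓ FunOn X) :=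
  (h.symm.restrict hX).symm

end Minors

/-- Minors of presentations are presentations: if `Π = (V,W)` is a
presentation on `E` and `X ⊆ E`, then both `Π↾X = (V↾X, W.X)` and `Π.X = (V.X, W↾X)`
are presentations on `X`. -/
theorem minor_isPresentation {α k : Type*} [Field k]
    (E : Set α) (V W : Submodule k (α → k)) (h : IsPresentationOn E V W)
    (X : Set α) (hX : X ⊆ E) :
    IsPresentationOn X (pairRes (V, W) X).1 (pairRes (V, W) X).2 ∧
      IsPresentationOn X (pairCon (V, W) X).1 (pairCon (V, W) X).2 :=
  ⟨h.restrict hX, h.contract hX⟩
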